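/- arXiv:1102.0999 — 5 statements merged into one kernel-verified Lean document; each statement's English description precedes it below -/
import Mathlib

section
/- For every real α with |α| ≥ 5, there is no continuously differentiable function g : [0, π] → ℝ satisfying g'(θ) > g(θ)² - g(θ)·cot(θ) - 1 + 4α·cos²(θ) + 4α²·sin²(θ)·cos²(θ) for all θ ∈ (0, π). -/
/-!
Multiply by `sin² θ`: for `v = g sin²`, the inequality and `(g sin θ + cos θ / 2)² ≥ 0` give
`v' > -sin² θ - cos² θ / 4 + 4 α sin² θ cos² θ + 4 α² sin⁴ θ cos² θ` on `(0, π)`. Since `v`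
vanishes at `0` and `π`, a primitive of the right-hand side must decrease over `[0, π]`; but its
increment is `(α² / 4 + α / 2 - 5 / 8) π`, which is nonnegative once `|α| ≥ 5`.
-/

open Real Set

theorem sub_lt_sub_of_hasDerivWithinAt_lt {F v f v' : ℝ → ℝ} {a b : ℝ} (hab : a < b)
    (hF : ∀ x ∈ Icc a b, HasDerivWithinAt F (f x) (Icc a b) x)
    (hv : ∀ x ∈ Icc a b, HasDerivWithinAt v (v' x) (Icc a b) x)
    (hlt : ∀ x ∈ Ioo a b, f x < v' x) :
    F b - F a < v b - v a := by
  have hmono : StrictMonoOn (fun x => v x - F x) (Icc a b) := by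
    refine strictMonoOn_of_hasDerivWithinAt_pos (convex_Icc a b)
      (fun x hx => ((hv x hx).sub (hF x hx)).continuousWithinAt) (f' := fun x => v' x - f x)
      (fun x hx => ?_) (fun x hx => ?_)
    · rw [interior_Icc] at hx ⊢
      exact ((hv x (Ioo_subset_Icc_self hx)).sub (hF x (Ioo_subset_Icc_self hx))).mono
        Ioo_subset_Icc_self
    · rw [interior_Icc] at hx
      exact sub_pos.2 (hlt x hx)
  have hends := hmono (left_mem_Icc.2 hab.le) (right_mem_Icc.2 hab.le) hab
  linarith

noncomputable def quadrupoleBound (α θ : ℝ) : ℝ :=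
  -sin θ ^ 2 - cos θ ^ 2 / 4 + 4 * α * sin θ ^ 2 * cos θ ^ 2
    + 4 * α ^ 2 * sin θ ^ 4 * cos θ ^ 2

theorem quadrupoleBound_lt {α θ g g' : ℝ} (hsin : 0 < sin θ)
    (h : g' > g ^ 2 - g * (cos θ / sin θ) - 1 + 4 * α * cos θ ^ 2
      + 4 * α ^ 2 * sin θ ^ 2 * cos θ ^ 2) :
    quadrupoleBound α θ < g' * sin θ ^ 2 + g * (2 * sin θ * cos θ) := by
  have hmul := mul_lt_mul_of_pos_right h (pow_pos hsin 2)
  have hcot : g * (cos θ / sin θ) * sin θ ^ 2 = g * sin θ * cos θ := by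
    field_simp
  unfold quadrupoleBound
  nlinarith [sq_nonneg (g * sin θ + cos θ / 2)]

/-- The slope is the mean of `quadrupoleBound α` over `[0, π]`; the remaining term carries the
factor `sin θ`, so it vanishes at `0` and `π`. -/
noncomputable def quadrupolePrimitive (α θ : ℝ) : ℝ :=
  (α ^ 2 / 4 + α / 2 - 5 / 8) * θ +
    sin θ * cos θ *
      ((3 / 8 + α / 2 + α ^ 2 / 4) + (-α - 7 * α ^ 2 / 6) * cos θ ^ 2 + (2 * α ^ 2 / 3) * cos θ ^ 4)

theorem hasDerivAt_quadrupolePrimitive (α θ : ℝ) :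
    HasDerivAt (quadrupolePrimitive α) (quadrupoleBound α θ) θ := by
  have hs := hasDerivAt_sin θ
  have hc := hasDerivAt_cos θ
  have h : HasDerivAt (quadrupolePrimitive α)
      ((α ^ 2 / 4 + α / 2 - 5 / 8) * 1 +
        ((cos θ * cos θ + sin θ * -sin θ) *
            ((3 / 8 + α / 2 + α ^ 2 / 4) + (-α - 7 * α ^ 2 / 6) * cos θ ^ 2
              + (2 * α ^ 2 / 3) * cos θ ^ 4) +
          sin θ * cos θ *
            ((-α - 7 * α ^ 2 / 6) * (2 * cos θ ^ 1 * -sin θ)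
              + (2 * α ^ 2 / 3) * (4 * cos θ ^ 3 * -sin θ)))) θ :=
    ((hasDerivAt_id θ).const_mul _).add
      ((hs.mul hc).mul ((((hc.pow 2).const_mul _).const_add _).add ((hc.pow 4).const_mul _)))
  convert h using 1
  unfold quadrupoleBound
  linear_combination
    (-5/8 + α/2 + α^2/4 + α * cos θ ^ 2 + α^2 * cos θ ^ 2 / 2
      - 2/3 * α^2 * cos θ ^ 4 + 4 * α^2 * sin θ ^ 2 * cos θ ^ 2) * sin_sq_add_cos_sq θ

theorem quadrupolePrimitive_pi_sub_zero (α : ℝ) :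
    quadrupolePrimitive α π - quadrupolePrimitive α 0 = (α ^ 2 / 4 + α / 2 - 5 / 8) * π := by
  simp [quadrupolePrimitive]

/-- For `|α| ≥ 5` there is no continuously differentiable `g : [0, π] → ℝ`
satisfying the determining inequality
`g' θ > g θ ^ 2 - g θ * cot θ - 1 + 4 α cos² θ + 4 α² sin² θ cos² θ`
for all `θ ∈ (0, π)`. -/
theorem no_foliation_large_quadrupole (α : ℝ) (hα : |α| ≥ 5) :
    ¬ ∃ g g' : ℝ → ℝ,
      (∀ θ ∈ Set.Icc (0 : ℝ) π, HasDerivWithinAt g (g' θ) (Set.Icc 0 π) θ) ∧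
      ContinuousOn g' (Set.Icc 0 π) ∧
      (∀ θ ∈ Set.Ioo (0 : ℝ) π,
        g' θ > (g θ) ^ 2 - g θ * (cos θ / sin θ) - 1
          + 4 * α * (cos θ) ^ 2 + 4 * α ^ 2 * (sin θ) ^ 2 * (cos θ) ^ 2) := by
  rintro ⟨g, g', hg, -, hineq⟩
  have hv : ∀ θ ∈ Icc 0 π, HasDerivWithinAt (fun θ => g θ * sin θ ^ 2)
      (g' θ * sin θ ^ 2 + g θ * (2 * sin θ * cos θ)) (Icc 0 π) θ := fun θ hθ => by
    have hsq : HasDerivAt (fun θ => sin θ ^ 2) (2 * sin θ * cos θ) θ :=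
      ((hasDerivAt_sin θ).pow 2).congr_deriv (by ring)
    exact (hg θ hθ).mul hsq.hasDerivWithinAt
  have hincr := sub_lt_sub_of_hasDerivWithinAt_lt pi_pos
    (fun θ _ => (hasDerivAt_quadrupolePrimitive α θ).hasDerivWithinAt) hv
    (fun θ hθ => quadrupoleBound_lt (sin_pos_of_pos_of_lt_pi hθ.1 hθ.2) (hineq θ hθ))
  rw [quadrupolePrimitive_pi_sub_zero] at hincr
  simp only [sin_pi, sin_zero] at hincr
  have hcoeff : 0 ≤ α ^ 2 / 4 + α / 2 - 5 / 8 := by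
    nlinarith [sq_abs α, neg_abs_le α]
  nlinarith [mul_nonneg hcoeff pi_pos.le]
end

section
/- For all α ∈ ℝ with |α| ≥ 5 and all θ ∈ [0.54π, 0.84π], one has Z(θ) = -1 - (1/4)·cot²θ + 4α·cos²θ + 4α²·sin²θ·cos²θ > 0. -/
open Real Set
set_option maxHeartbeats 1000000

private lemma Z_aux (α x t : ℝ) (hα : |α| ≥ 5)
    (hx1 : (0.01565 : ℝ) ≤ x) (hx2 : x ≤ 0.7704)
    (_ht0 : 0 ≤ t) (ht : t * (1 - x) = x) :
    -1 - (1 / 4) * t + 4 * α * x + 4 * α ^ 2 * (1 - x) * x > 0 := by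
  have hx0 : (0:ℝ) ≤ x := by linarith
  have h1mx : (0:ℝ) ≤ 1 - x := by linarith
  have hkey : 20 * x * (4 - 5 * x) ≤ 4 * α * x + 4 * α ^ 2 * (1 - x) * x := by
    rcases le_or_gt 0 α with hpos | hneg
    · have hα5 : (5:ℝ) ≤ α := by rwa [abs_of_nonneg hpos] at hα
      nlinarith [mul_nonneg hx0 (mul_nonneg (by linarith : (0:ℝ) ≤ α + 5)
        (by nlinarith [mul_nonneg h1mx (by linarith : (0:ℝ) ≤ α - 5)] :
          (0:ℝ) ≤ 1 + (1 - x) * (α - 5)))]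
    · have hα5 : α ≤ -5 := by
        have h := abs_of_neg hneg
        rw [h] at hα; linarith
      have hin : (1:ℝ) + (1 - x) * (α - 5) ≤ 0 := by
        nlinarith [mul_nonneg h1mx (by linarith : (0:ℝ) ≤ -5 - α)]
      nlinarith [mul_nonneg hx0 (mul_nonneg (by linarith : (0:ℝ) ≤ -(α + 5))
        (by linarith : (0:ℝ) ≤ -(1 + (1 - x) * (α - 5))))]
  have hpoly : 4 * (1 - x) * (20 * x * (4 - 5 * x) - 1) - x > 0 := by
    have c1 : (0:ℝ) ≤ (x - 0.01565) * (0.7704 - x) * (0.7704 - x) :=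
      mul_nonneg (mul_nonneg (by linarith) (by linarith)) (by linarith)
    have c2 : (0:ℝ) ≤ (x - 0.01565) * (0.7704 - x) :=
      mul_nonneg (by linarith) (by linarith)
    nlinarith [c1, c2]
  have h1x : (0:ℝ) < 1 - x := by linarith
  have htb : t ≤ x / (1 - x) := by
    rw [le_div_iff₀ h1x]; linarith
  have hdivb : x / (1 - x) < 4 * (20 * x * (4 - 5 * x) - 1) := by
    rw [div_lt_iff₀ h1x]; nlinarith
  linarith

/-- For `|α| ≥ 5` and every `θ ∈ [0.54π, 0.84π]`,
`Z θ = -1 - cot²θ/4 + 4α cos²θ + 4α² sin²θ cos²θ > 0`. -/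
theorem Z_pos_on_interval (α : ℝ) (hα : |α| ≥ 5) (θ : ℝ)
    (hθ : θ ∈ Set.Icc (0.54 * π) (0.84 * π)) :
    -1 - (1 / 4) * (cos θ / sin θ) ^ 2
      + 4 * α * (cos θ) ^ 2 + 4 * α ^ 2 * (sin θ) ^ 2 * (cos θ) ^ 2 > 0 := by
  obtain ⟨hθ1, hθ2⟩ := hθ
  have hπl : (3.141592 : ℝ) < π := pi_gt_d6
  have hπu : π < 3.141593 := pi_lt_d6
  have hπ0 : (0:ℝ) < π := by linarith
  -- sin θ > 0
  have hθpos : 0 < θ := by nlinarith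
  have hθltpi : θ < π := by nlinarith
  have hs : 0 < sin θ := sin_pos_of_pos_of_lt_pi hθpos hθltpi
  -- upper bound on cos θ : cos θ ≤ cos (0.54π) = -sin(0.04π) ≤ -0.1251
  have h1 : cos θ ≤ cos (0.54 * π) :=
    cos_le_cos_of_nonneg_of_le_pi (by positivity) (le_of_lt hθltpi) hθ1
  have h2 : cos (0.84 * π) ≤ cos θ :=
    cos_le_cos_of_nonneg_of_le_pi (by positivity) (by linarith) hθ2
  have e1 : cos (0.54 * π) = -sin (0.04 * π) := by
    have : (0.54 : ℝ) * π = 0.04 * π + π / 2 := by ring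
    rw [this, cos_add_pi_div_two]
  have e2 : cos (0.84 * π) = -cos (0.16 * π) := by
    have : (0.84 : ℝ) * π = π - 0.16 * π := by ring
    rw [this, cos_pi_sub]
  -- sin(0.04π) ≥ 0.1251
  have hx04 : (0.1256636 : ℝ) < 0.04 * π := by linarith
  have hx04' : (0.04 : ℝ) * π ≤ 1 := by nlinarith
  have hb1 : (0.1251 : ℝ) < sin (0.04 * π) := by
    have := sin_gt_sub_cube (by linarith : (0:ℝ) < 0.04 * π)
    nlinarith [sq_nonneg (0.04 * π)]
  -- cos(0.16π) = 2 cos(0.08π)^2 - 1 = 1 - 2 sin(0.08π)^2 ≤ 0.8777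
  have e3 : cos (0.16 * π) = 1 - 2 * sin (0.08 * π) ^ 2 := by
    have : (0.16 : ℝ) * π = 2 * (0.08 * π) := by ring
    rw [this, cos_two_mul, cos_sq']; ring
  have hx08 : (0.25132736 : ℝ) < 0.08 * π := by linarith
  have hx08' : (0.08 : ℝ) * π ≤ 1 := by nlinarith
  have hb2 : (0.24729 : ℝ) < sin (0.08 * π) := by
    have := sin_gt_sub_cube (by linarith : (0:ℝ) < 0.08 * π)
    nlinarith [sq_nonneg (0.08 * π)]
  have hb2' : sin (0.08 * π) ≤ 1 := sin_le_one _
  have hcub : cos θ ≤ -0.1251 := by rw [e1] at h1; linarith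
  have hclb : -0.8777 ≤ cos θ := by
    rw [e2, e3] at h2; nlinarith
  -- x = cos θ ^ 2 bounds
  set x := cos θ ^ 2 with hxdef
  have hx1 : (0.01565 : ℝ) ≤ x := by nlinarith [sq_nonneg (cos θ + 0.1251)]
  have hx2 : x ≤ 0.7704 := by nlinarith [mul_nonneg (by linarith : (0:ℝ) ≤ cos θ + 0.8777) (by linarith : (0:ℝ) ≤ 0.8777 - cos θ)]
  have hs2 : sin θ ^ 2 = 1 - x := by rw [hxdef, sin_sq]
  -- cot term
  have ht : (cos θ / sin θ) ^ 2 * (1 - x) = x := by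
    rw [div_pow, hxdef, ← hs2]
    field_simp
  have hmain := Z_aux α x ((cos θ / sin θ) ^ 2) hα hx1 hx2 (sq_nonneg _) ht
  calc (0:ℝ) < -1 - (1/4) * ((cos θ / sin θ) ^ 2) + 4 * α * x + 4 * α ^ 2 * (1 - x) * x := hmain
    _ = -1 - (1/4) * (cos θ / sin θ) ^ 2 + 4 * α * (cos θ)^2 + 4 * α^2 * (sin θ)^2 * (cos θ)^2 := by
        rw [hxdef, ← hs2]
end

section
/- The function G₂(θ) = 1 - 4α·cos²θ - 4α²·sin²θ·cos²θ is strictly positive for all θ ∈ [0, π] if and only if -2 < α < 1/4 (for α ≠ 0; for α = 0 it is identically 1). -/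
open Real Set

/-! With `x = cos²θ`, which sweeps `[0, 1]` as `θ` runs over `[0, π]`, `G₂` becomes the
quadratic `q(x) = 1 - 4αx - 4α²x(1 - x)`. Completing the square,
`q(x) = (2αx - (1 + α))² - α(α + 2)`, and `q(x) - q(1) = 4α(1 - x)(1 - αx)` with `q(1) = 1 - 4α`.
For `α ≥ 0` the second identity gives `q ≥ 1 - 4α`; for `α < 0` the first gives `q ≥ -α(α + 2)`,
with equality at the vertex `x = (1 + α)/(2α)`, which lies in `[0, 1]` exactly when `α ≤ -1`. -/

def quadrupoleQuadratic (α x : ℝ) : ℝ := 1 - 4 * α * x - 4 * α ^ 2 * (1 - x) * x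

lemma quadrupoleQuadratic_eq_sq_sub (α x : ℝ) :
    quadrupoleQuadratic α x = (2 * α * x - (1 + α)) ^ 2 - α * (α + 2) := by
  unfold quadrupoleQuadratic; ring

lemma quadrupoleQuadratic_sub_one_sub (α x : ℝ) :
    quadrupoleQuadratic α x - (1 - 4 * α) = 4 * α * (1 - x) * (1 - α * x) := by
  unfold quadrupoleQuadratic; ring

lemma quadrupoleQuadratic_one (α : ℝ) : quadrupoleQuadratic α 1 = 1 - 4 * α := by
  unfold quadrupoleQuadratic; ring

lemma quadrupoleQuadratic_vertex {α : ℝ} (hα : α ≠ 0) :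
    quadrupoleQuadratic α ((1 + α) / (2 * α)) = -(α * (α + 2)) := by
  rw [quadrupoleQuadratic_eq_sq_sub, mul_div_cancel₀ _ (mul_ne_zero two_ne_zero hα)]
  ring

lemma one_add_div_two_mul_mem_Icc {α : ℝ} (hα : α ≤ -1) :
    (1 + α) / (2 * α) ∈ Icc (0 : ℝ) 1 := by
  have h2α : 2 * α < 0 := by linarith
  exact ⟨div_nonneg_of_nonpos (by linarith) h2α.le, (div_le_one_of_neg h2α).2 (by linarith)⟩

lemma quadrupoleQuadratic_pos_of_nonneg {α x : ℝ} (hα : 0 ≤ α) (hα' : α < 1 / 4)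
    (hx : x ∈ Icc (0 : ℝ) 1) : 0 < quadrupoleQuadratic α x := by
  have hαx : α * x ≤ 1 := by nlinarith [hx.1, hx.2]
  have hdiff := quadrupoleQuadratic_sub_one_sub α x
  have hprod : 0 ≤ 4 * α * (1 - x) * (1 - α * x) :=
    mul_nonneg (mul_nonneg (by positivity) (sub_nonneg.2 hx.2)) (sub_nonneg.2 hαx)
  linarith

lemma quadrupoleQuadratic_pos_of_neg {α : ℝ} (hα : α < 0) (hα' : -2 < α) (x : ℝ) :
    0 < quadrupoleQuadratic α x := by
  rw [quadrupoleQuadratic_eq_sq_sub]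
  nlinarith [sq_nonneg (2 * α * x - (1 + α))]

theorem quadrupoleQuadratic_pos_on_Icc_iff (α : ℝ) :
    (∀ x ∈ Icc (0 : ℝ) 1, 0 < quadrupoleQuadratic α x) ↔ -2 < α ∧ α < 1 / 4 := by
  constructor
  · intro H
    have h1 := quadrupoleQuadratic_one α ▸ H 1 ⟨zero_le_one, le_rfl⟩
    refine ⟨?_, by linarith⟩
    by_contra! hα
    have hv := H _ (one_add_div_two_mul_mem_Icc (by linarith))
    rw [quadrupoleQuadratic_vertex (by linarith)] at hv
    nlinarith
  · rintro ⟨h2, h4⟩ x hx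
    rcases lt_or_ge α 0 with hα | hα
    · exact quadrupoleQuadratic_pos_of_neg hα h2 x
    · exact quadrupoleQuadratic_pos_of_nonneg hα h4 hx

lemma cos_sq_image_Icc_zero_pi : (fun θ ↦ cos θ ^ 2) '' Icc 0 π = Icc (0 : ℝ) 1 := by
  refine Subset.antisymm ?_ fun x hx ↦ ?_
  · rintro _ ⟨θ, -, rfl⟩
    exact ⟨sq_nonneg _, cos_sq_le_one θ⟩
  · obtain ⟨θ, hθ, hcos⟩ := surjOn_cos
      (⟨by linarith [sqrt_nonneg x], sqrt_le_one.2 hx.2⟩ : √x ∈ Icc (-1 : ℝ) 1)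
    exact ⟨θ, hθ, by simp only [hcos, sq_sqrt hx.1]⟩

lemma quadrupoleG₂_eq_quadrupoleQuadratic (α θ : ℝ) :
    1 - 4 * α * (cos θ) ^ 2 - 4 * α ^ 2 * (sin θ) ^ 2 * (cos θ) ^ 2
      = quadrupoleQuadratic α (cos θ ^ 2) := by
  rw [quadrupoleQuadratic, sin_sq]

/-- `G₂(θ) = 1 - 4α cos²θ - 4α² sin²θ cos²θ` is strictly positive on `[0, π]`
if and only if `-2 < α < 1/4`. -/
theorem quadrupole_positivity (α : ℝ) :
    (∀ θ ∈ Set.Icc (0 : ℝ) π,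
        1 - 4 * α * (cos θ) ^ 2 - 4 * α ^ 2 * (sin θ) ^ 2 * (cos θ) ^ 2 > 0)
      ↔ (-2 < α ∧ α < 1 / 4) := by
  simp_rw [quadrupoleG₂_eq_quadrupoleQuadratic, gt_iff_lt]
  rw [← quadrupoleQuadratic_pos_on_Icc_iff, ← cos_sq_image_Icc_zero_pi, forall_mem_image]
end

section
/- The function G₁₃(θ) = 1 - 2α·cos θ·(1 - 3cos²θ) - α²·sin²θ·(1 - 3cos²θ)² is strictly positive for all θ ∈ [0, π] whenever |α| < 1/4. -/
open Real Set

/-- Auxiliary: if `|α| < 1/4` and `|B| ≤ 4` then `1 - α * B > 0`. -/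
lemma aux_pos {α B : ℝ} (hα : |α| < 1 / 4) (hB : |B| ≤ 4) : 1 - α * B > 0 := by
  have h : |α * B| < 1 := by
    calc |α * B| = |α| * |B| := abs_mul α B
    _ ≤ |α| * 4 := by nlinarith [abs_nonneg α]
    _ < 1 := by linarith
  have := (abs_lt.mp h).2
  linarith

/-- `G₁₃(θ) = 1 - 2α cos θ (1 - 3cos²θ) - α² sin²θ (1 - 3cos²θ)²` is strictly
positive on `[0, π]` whenever `|α| < 1/4`. -/
theorem dipole_octupole_positivity (α : ℝ) (hα : |α| < 1 / 4) :
    ∀ θ ∈ Set.Icc (0 : ℝ) π,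
      1 - 2 * α * cos θ * (1 - 3 * (cos θ) ^ 2)
        - α ^ 2 * (sin θ) ^ 2 * (1 - 3 * (cos θ) ^ 2) ^ 2 > 0 := by
  intro θ _
  have hs : (sin θ) ^ 2 = 1 - (cos θ) ^ 2 := Real.sin_sq θ
  set c := cos θ with hc
  have h1 : -1 ≤ c := Real.neg_one_le_cos θ
  have h2 : c ≤ 1 := Real.cos_le_one θ
  have hB1 : |(1 + c) * (1 - 3 * c ^ 2)| ≤ 4 := by
    rw [abs_le]
    constructor <;> nlinarith [sq_nonneg (c - 1), sq_nonneg (c + 1), sq_nonneg c,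
      sq_nonneg (c * (c - 1)), sq_nonneg (c * (c + 1)), sq_nonneg (c^2 - 1),
      sq_nonneg (3 * c + 1), sq_nonneg (3 * c - 1)]
  have hB2 : |(1 - c) * (1 - 3 * c ^ 2)| ≤ 4 := by
    rw [abs_le]
    constructor <;> nlinarith [sq_nonneg (c - 1), sq_nonneg (c + 1), sq_nonneg c,
      sq_nonneg (c * (c - 1)), sq_nonneg (c * (c + 1)), sq_nonneg (c^2 - 1),
      sq_nonneg (3 * c + 1), sq_nonneg (3 * c - 1)]
  have f1 : 1 - α * ((1 + c) * (1 - 3 * c ^ 2)) > 0 := aux_pos hα hB1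
  have f2 : 1 - (-α) * ((1 - c) * (1 - 3 * c ^ 2)) > 0 := by
    have : |(-α)| < 1 / 4 := by rwa [abs_neg]
    exact aux_pos this hB2
  have := mul_pos f1 f2
  rw [hs]
  nlinarith [this]
end

section
/- For α ≥ 3, there is no differentiable function g : [0, π] → ℝ satisfying g'(θ) > g(θ)² - g(θ)·cot θ - 1 + 4α·cos²θ + 4α²·sin²θ·cos²θ for all θ ∈ (0, π). -/
open Real Set

/-!
Substituting `u = g - cot θ / 2` turns the inequality into the Riccati inequality
`u' > u² + Q` with `Q = riccatiPotential α`. If a rate `w` satisfies `w ≤ k` and `k w ≤ Q`, then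
`arctan (u / k)` grows at least as fast as `∫ w`; since `arctan` takes values in an interval of
length `π`, `∫ w < π` over every interval on which `u` is defined. For `α ≥ 3`, `k = 7/2` and
`w = 2 + (3/2) cos 2θ - (3/4) cos 4θ` are admissible on `(0, π)`, while `∫ w > π` over
`[π/8, 7π/8]`.
-/

theorem sub_lt_pi_of_riccati {u u' Q W w : ℝ → ℝ} {a b k : ℝ} (hk : 0 < k) (hab : a ≤ b)
    (hu : ∀ t ∈ Icc a b, HasDerivAt u (u' t) t) (hriccati : ∀ t ∈ Icc a b, u t ^ 2 + Q t ≤ u' t)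
    (hW : ∀ t ∈ Icc a b, HasDerivAt W (w t) t) (hwk : ∀ t ∈ Icc a b, w t ≤ k)
    (hwQ : ∀ t ∈ Icc a b, k * w t ≤ Q t) :
    W b - W a < π := by
  have hF : ∀ t ∈ Icc a b, HasDerivAt (fun s => arctan (u s / k) - W s)
      (1 / (1 + (u t / k) ^ 2) * (u' t / k) - w t) t :=
    fun t ht => ((hu t ht).div_const k).arctan.sub (hW t ht)
  have hF_nonneg : ∀ t ∈ Icc a b, 0 ≤ 1 / (1 + (u t / k) ^ 2) * (u' t / k) - w t := by
    intro t ht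
    have hcomp : w t * (k ^ 2 + u t ^ 2) ≤ k * u' t := by
      nlinarith [hriccati t ht, hwk t ht, hwQ t ht, sq_nonneg (u t)]
    have hrw : 1 / (1 + (u t / k) ^ 2) * (u' t / k) = k * u' t / (k ^ 2 + u t ^ 2) := by
      field_simp
    rw [hrw, sub_nonneg, le_div_iff₀ (by positivity)]
    exact hcomp
  have hmono : MonotoneOn (fun s => arctan (u s / k) - W s) (Icc a b) :=
    monotoneOn_of_hasDerivWithinAt_nonneg (convex_Icc a b)
      (fun t ht => (hF t ht).continuousAt.continuousWithinAt)
      (fun t ht => (hF t (interior_subset ht)).hasDerivWithinAt)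
      (fun t ht => hF_nonneg t (interior_subset ht))
  have hFab := hmono (left_mem_Icc.2 hab) (right_mem_Icc.2 hab) hab
  dsimp only at hFab
  linarith [arctan_lt_pi_div_two (u b / k), neg_pi_div_two_lt_arctan (u a / k)]

theorem hasDerivAt_cos_div_two_mul_sin {θ : ℝ} (hθ : sin θ ≠ 0) :
    HasDerivAt (fun t => cos t / (2 * sin t)) (-(1 / (2 * sin θ ^ 2))) θ := by
  have h : HasDerivAt (fun t => cos t / (2 * sin t)) _ θ :=
    (hasDerivAt_cos θ).div ((hasDerivAt_sin θ).const_mul 2) (by positivity)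
  convert h using 1
  field_simp
  linear_combination sin_sq_add_cos_sq θ

noncomputable def riccatiPotential (α θ : ℝ) : ℝ :=
  1 / (4 * sin θ ^ 2) - 3 / 4 + 4 * α * cos θ ^ 2 + 4 * α ^ 2 * sin θ ^ 2 * cos θ ^ 2

noncomputable def comparisonPhase (θ : ℝ) : ℝ := 2 * θ + 3 / 4 * sin (2 * θ) - 3 / 16 * sin (4 * θ)

noncomputable def comparisonRate (θ : ℝ) : ℝ := 11 / 4 + 3 * sin θ ^ 2 - 6 * sin θ ^ 4


theorem sq_sub_add_riccatiPotential_le {α θ y y' : ℝ} (hθ : sin θ ≠ 0)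
    (h : y ^ 2 - y * (cos θ / sin θ) - 1 + 4 * α * cos θ ^ 2 + 4 * α ^ 2 * sin θ ^ 2 * cos θ ^ 2
      < y') :
    (y - cos θ / (2 * sin θ)) ^ 2 + riccatiPotential α θ ≤ y' + 1 / (2 * sin θ ^ 2) := by
  have hsplit : (y - cos θ / (2 * sin θ)) ^ 2 + riccatiPotential α θ
      = y ^ 2 - y * (cos θ / sin θ) - 1 + 4 * α * cos θ ^ 2 + 4 * α ^ 2 * sin θ ^ 2 * cos θ ^ 2
        + 1 / (2 * sin θ ^ 2) := by
    unfold riccatiPotential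
    field_simp
    linear_combination 4 * sin_sq_add_cos_sq θ
  linarith

theorem hasDerivAt_comparisonPhase (θ : ℝ) : HasDerivAt comparisonPhase (comparisonRate θ) θ := by
  have h2 : HasDerivAt (fun t : ℝ => sin (2 * t)) (cos (2 * θ) * 2) θ := by
    simpa using ((hasDerivAt_id θ).const_mul 2).sin
  have h4 : HasDerivAt (fun t : ℝ => sin (4 * t)) (cos (4 * θ) * 4) θ := by
    simpa using ((hasDerivAt_id θ).const_mul 4).sin
  have h : HasDerivAt (fun t => 2 * t + 3 / 4 * sin (2 * t) - 3 / 16 * sin (4 * t)) _ θ :=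
    (((hasDerivAt_id θ).const_mul 2).add (h2.const_mul (3 / 4))).sub (h4.const_mul (3 / 16))
  refine h.congr_deriv ?_
  have hc4 : cos (4 * θ) = 2 * cos (2 * θ) ^ 2 - 1 := by
    rw [show 4 * θ = 2 * (2 * θ) by ring, cos_two_mul]
  rw [comparisonRate, hc4, cos_two_mul, cos_sq']
  ring

theorem comparisonRate_le (θ : ℝ) : comparisonRate θ ≤ 7 / 2 := by
  unfold comparisonRate
  nlinarith [sq_nonneg (sin θ ^ 2 - 1 / 4)]

theorem mul_comparisonRate_le_riccatiPotential {α θ : ℝ} (hα : 3 ≤ α) (hθ : sin θ ≠ 0) :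
    7 / 2 * comparisonRate θ ≤ riccatiPotential α θ := by
  set S := sin θ ^ 2 with hS
  have hS0 : 0 < S := by positivity
  have hS1 : S ≤ 1 := sin_sq_le_one θ
  have hc : cos θ ^ 2 = 1 - S := cos_sq' θ
  have hlin : 12 * (1 - S) ≤ 4 * α * (1 - S) := by nlinarith
  have hquad : 36 * S * (1 - S) ≤ 4 * α ^ 2 * S * (1 - S) := by
    have : 0 ≤ (α ^ 2 - 9) * (S * (1 - S)) :=
      mul_nonneg (by nlinarith) (mul_nonneg hS0.le (by linarith))
    linarith
  have hrecip : -(13 / 8) - 27 / 2 * S + 15 * S ^ 2 ≤ 1 / (4 * S) := by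
    rw [le_div_iff₀ (by positivity)]
    nlinarith
  unfold riccatiPotential comparisonRate
  rw [← hS, hc, show sin θ ^ 4 = S ^ 2 by rw [hS]; ring]
  linarith

theorem pi_lt_comparisonPhase_sub : π < comparisonPhase (7 * π / 8) - comparisonPhase (π / 8) := by
  have hsin2 : sin (2 * (7 * π / 8)) = -sin (2 * (π / 8)) := by
    rw [show 2 * (7 * π / 8) = -(2 * (π / 8)) + 2 * π by ring, sin_add_two_pi, sin_neg]
  have hsin4 : sin (4 * (7 * π / 8)) = -sin (4 * (π / 8)) := by
    rw [show 4 * (7 * π / 8) = -(4 * (π / 8)) + 2 * π + 2 * π by ring, sin_add_two_pi,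
      sin_add_two_pi, sin_neg]
  have hsin_pi_div_four : sin (2 * (π / 8)) < 3 / 4 := by
    rw [show 2 * (π / 8) = π / 4 by ring, sin_pi_div_four]
    nlinarith [sq_sqrt (show (0 : ℝ) ≤ 2 by norm_num), sqrt_nonneg 2]
  have hsin_pi_div_two : sin (4 * (π / 8)) = 1 := by
    rw [show 4 * (π / 8) = π / 2 by ring, sin_pi_div_two]
  rw [comparisonPhase, comparisonPhase, hsin2, hsin4, hsin_pi_div_two]
  linarith [pi_gt_three]

/-- For `α ≥ 3` there is no differentiable `g : [0, π] → ℝ` satisfying the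
quadrupole determining inequality on `(0, π)`. -/
theorem no_foliation_alpha_ge_three (α : ℝ) (hα : α ≥ 3) :
    ¬ ∃ g g' : ℝ → ℝ,
      (∀ θ ∈ Set.Icc (0 : ℝ) π, HasDerivWithinAt g (g' θ) (Set.Icc 0 π) θ) ∧
      (∀ θ ∈ Set.Ioo (0 : ℝ) π,
        g' θ > (g θ) ^ 2 - g θ * (cos θ / sin θ) - 1
          + 4 * α * (cos θ) ^ 2 + 4 * α ^ 2 * (sin θ) ^ 2 * (cos θ) ^ 2) := by
  rintro ⟨g, g', hderiv, hineq⟩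
  have hsub : Icc (π / 8) (7 * π / 8) ⊆ Ioo 0 π := fun θ hθ =>
    ⟨by linarith [hθ.1, pi_pos], by linarith [hθ.2, pi_pos]⟩
  have hsin : ∀ θ ∈ Icc (π / 8) (7 * π / 8), sin θ ≠ 0 := fun θ hθ =>
    (sin_pos_of_mem_Ioo (hsub hθ)).ne'
  have hu : ∀ θ ∈ Icc (π / 8) (7 * π / 8), HasDerivAt (fun t => g t - cos t / (2 * sin t))
      (g' θ + 1 / (2 * sin θ ^ 2)) θ := by
    intro θ hθ
    have hg : HasDerivAt g (g' θ) θ :=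
      (hderiv θ (Ioo_subset_Icc_self (hsub hθ))).hasDerivAt (Icc_mem_nhds (hsub hθ).1 (hsub hθ).2)
    have h := hg.sub (hasDerivAt_cos_div_two_mul_sin (hsin θ hθ))
    rwa [sub_neg_eq_add] at h
  have hphase_lt := sub_lt_pi_of_riccati (by norm_num : (0 : ℝ) < 7 / 2) (by linarith [pi_pos]) hu
    (fun θ hθ => sq_sub_add_riccatiPotential_le (hsin θ hθ) (hineq θ (hsub hθ)))
    (fun θ _ => hasDerivAt_comparisonPhase θ) (fun θ _ => comparisonRate_le θ)
    (fun θ hθ => mul_comparisonRate_le_riccatiPotential hα (hsin θ hθ))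
  linarith [pi_lt_comparisonPhase_sub]
end
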